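/- arXiv:0910.4834 — 4 statements merged into one kernel-verified Lean document; each statement's English description precedes it below -/
import Mathlib

section
/- Let r_1 ≤ r_2 ≤ ... ≤ r_m be positive reals (with r_{m+1} := ∞), and for a finite user set I' with positive loads ρ_i and capacities with C(J') > ∑_{i∈I'} ρ_i, define Π(k) := (C(J') − ∑_{i∈I', i>k} ρ_i)/(∑_{i∈I', i≤k} ρ_i/r_i) for k with the denominator nonzero. Then there exists a unique k* ∈ {1,...,m} such that r_{k*} < Π(k*) ≤ r_{k*+1}. -/
theorem exists_unique_peak_rate_index (m : ℕ) (hm : 0 < m)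
    (r : ℕ → ℝ) (ρ : ℕ → ℝ) (I' : Finset ℕ) (Cv : ℝ)
    (hI'sub : I' ⊆ Finset.Icc 1 m) (hI'ne : I'.Nonempty)
    (hr_pos : ∀ k ∈ Finset.Icc 1 m, 0 < r k)
    (hr_mono : ∀ k k', 1 ≤ k → k ≤ k' → k' ≤ m → r k ≤ r k')
    (hρ : ∀ i ∈ I', 0 < ρ i)
    (hC : (∑ i ∈ I', ρ i) < Cv) :
    ∃! k, k ∈ Finset.Icc 1 m ∧
      r k < (Cv - ∑ i ∈ I'.filter (fun i => k < i), ρ i) /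
              (∑ i ∈ I'.filter (fun i => i ≤ k), ρ i / r i) ∧
      (k < m →
        (Cv - ∑ i ∈ I'.filter (fun i => k < i), ρ i) /
            (∑ i ∈ I'.filter (fun i => i ≤ k), ρ i / r i) ≤ r (k + 1)) := by
  classical
  set k0 := I'.min' hI'ne with hk0
  have hk0I : k0 ∈ I' := I'.min'_mem hI'ne
  have hk0m := hI'sub hk0I
  have hk01 : 1 ≤ k0 := (Finset.mem_Icc.mp hk0m).1
  have hk0le : k0 ≤ m := (Finset.mem_Icc.mp hk0m).2
  have hmin : ∀ i ∈ I', k0 ≤ i := fun i hi => I'.min'_le i hi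
  have hrpos' : ∀ i ∈ I', 0 < r i := fun i hi => hr_pos i (hI'sub hi)
  set D : ℕ → ℝ := fun k => ∑ i ∈ I'.filter (fun i => i ≤ k), ρ i / r i with hDdef
  set N : ℕ → ℝ := fun k => Cv - ∑ i ∈ I'.filter (fun i => k < i), ρ i with hNdef
  set g : ℕ → ℝ := fun k => N k - r k * D k with hgdef
  have hexpr : ∀ k, (Cv - ∑ i ∈ I'.filter (fun i => k < i), ρ i) /
      (∑ i ∈ I'.filter (fun i => i ≤ k), ρ i / r i) = N k / D k := fun k => rfl
  have hDpos : ∀ k, k0 ≤ k → 0 < D k := by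
    intro k hk
    apply Finset.sum_pos
    · intro i hi
      rcases Finset.mem_filter.mp hi with ⟨hi1, _⟩
      exact div_pos (hρ i hi1) (hrpos' i hi1)
    · exact ⟨k0, Finset.mem_filter.mpr ⟨hk0I, hk⟩⟩
  have hDnonneg : ∀ k, 0 ≤ D k := by
    intro k
    apply Finset.sum_nonneg
    intro i hi
    rcases Finset.mem_filter.mp hi with ⟨hi1, _⟩
    exact le_of_lt (div_pos (hρ i hi1) (hrpos' i hi1))
  have hDzero : ∀ k, k < k0 → D k = 0 := by
    intro k hk
    have he : I'.filter (fun i => i ≤ k) = ∅ := by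
      apply Finset.filter_eq_empty_iff.mpr
      intro i hi
      have := hmin i hi
      omega
    simp [hDdef, he]
  have hsplit : ∀ (F : ℕ → ℝ) (k : ℕ),
      ∑ i ∈ I'.filter (fun i => i ≤ k + 1), F i
        = (∑ i ∈ I'.filter (fun i => i ≤ k), F i) + (if k + 1 ∈ I' then F (k+1) else 0) := by
    intro F k
    have h1 : ∑ i ∈ I'.filter (fun i => i = k+1), F i = if k+1 ∈ I' then F (k+1) else 0 := by
      rw [Finset.filter_eq']
      split_ifs <;> simp
    rw [← h1, Finset.sum_filter, Finset.sum_filter, Finset.sum_filter, ← Finset.sum_add_distrib]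
    apply Finset.sum_congr rfl
    intro i _
    by_cases h : i ≤ k + 1 <;> by_cases h2 : i ≤ k <;> by_cases h3 : i = k+1 <;>
      simp [h, h2, h3] <;> omega
  have hsplit2 : ∀ k : ℕ, ∑ i ∈ I'.filter (fun i => k < i), ρ i
      = (∑ i ∈ I'.filter (fun i => k + 1 < i), ρ i) + (if k + 1 ∈ I' then ρ (k+1) else 0) := by
    intro k
    have h1 : ∑ i ∈ I'.filter (fun i => i = k+1), ρ i = if k+1 ∈ I' then ρ (k+1) else 0 := by
      rw [Finset.filter_eq']
      split_ifs <;> simp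
    rw [← h1, Finset.sum_filter, Finset.sum_filter, Finset.sum_filter, ← Finset.sum_add_distrib]
    apply Finset.sum_congr rfl
    intro i _
    by_cases h : k < i <;> by_cases h2 : k + 1 < i <;> by_cases h3 : i = k+1 <;>
      simp [h, h2, h3] <;> omega
  have hstep : ∀ k, k + 1 ≤ m → g (k+1) = N k - r (k+1) * D k := by
    intro k hk
    have hr1 : r (k+1) ≠ 0 := ne_of_gt (hr_pos (k+1) (Finset.mem_Icc.mpr ⟨by omega, hk⟩))
    simp only [hgdef, hNdef, hDdef]
    rw [hsplit (fun i => ρ i / r i) k, hsplit2 k]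
    split_ifs with h
    · field_simp
      ring
    · simp
  have hmono : ∀ k, 1 ≤ k → k + 1 ≤ m → g (k+1) ≤ g k := by
    intro k h1 h2
    rw [hstep k h2]
    have hrr := hr_mono k (k+1) h1 (by omega) h2
    have hD := hDnonneg k
    simp only [hgdef]
    nlinarith [mul_le_mul_of_nonneg_right hrr hD]
  have hanti : ∀ a b, 1 ≤ a → a ≤ b → b ≤ m → g b ≤ g a := by
    intro a b ha hab hbm
    induction b with
    | zero => omega
    | succ n ih =>
      rcases eq_or_lt_of_le hab with h | h
      · exact le_of_eq (congrArg g h.symm)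
      · have h1 : a ≤ n := by omega
        exact le_trans (hmono n (by omega) hbm) (ih h1 (by omega))
  have hfk0 : I'.filter (fun i => i ≤ k0) = {k0} := by
    ext i
    simp only [Finset.mem_filter, Finset.mem_singleton]
    constructor
    · rintro ⟨hi, hle⟩
      exact le_antisymm hle (hmin i hi)
    · rintro rfl
      exact ⟨hk0I, le_refl _⟩
  have hsum0 : ∑ i ∈ I'.filter (fun i => k0 < i), ρ i = (∑ i ∈ I', ρ i) - ρ k0 := by
    have hh := Finset.sum_filter_add_sum_filter_not I' (fun i => k0 < i) ρ
    have hnot : I'.filter (fun i => ¬ k0 < i) = {k0} := by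
      rw [← hfk0]
      apply Finset.filter_congr
      intro i hi
      simp [Nat.not_lt]
    rw [hnot, Finset.sum_singleton] at hh
    linarith
  have hg_k0 : 0 < g k0 := by
    have hr0 : r k0 ≠ 0 := ne_of_gt (hrpos' k0 hk0I)
    simp only [hgdef, hNdef, hDdef, hfk0]
    rw [Finset.sum_singleton, hsum0]
    have hcancel : r k0 * (ρ k0 / r k0) = ρ k0 := by
      field_simp
    rw [hcancel]
    linarith
  set S := (Finset.Icc k0 m).filter (fun k => 0 < g k) with hS
  have hSne : S.Nonempty :=
    ⟨k0, Finset.mem_filter.mpr ⟨Finset.mem_Icc.mpr ⟨le_refl _, hk0le⟩, hg_k0⟩⟩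
  set K := S.max' hSne with hK
  have hKS : K ∈ S := S.max'_mem hSne
  have hKIcc : K ∈ Finset.Icc k0 m := (Finset.mem_filter.mp hKS).1
  have hgK : 0 < g K := (Finset.mem_filter.mp hKS).2
  have hk0K : k0 ≤ K := (Finset.mem_Icc.mp hKIcc).1
  have hKm : K ≤ m := (Finset.mem_Icc.mp hKIcc).2
  have hnext : K < m → g (K+1) ≤ 0 := by
    intro h
    by_contra hc
    push_neg at hc
    have hmem : K + 1 ∈ S :=
      Finset.mem_filter.mpr ⟨Finset.mem_Icc.mpr ⟨by omega, by omega⟩, hc⟩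
    have := S.le_max' (K+1) hmem
    omega
  have hcond : ∀ k, k0 ≤ k → (r k < N k / D k ↔ 0 < g k) := by
    intro k h1
    rw [lt_div_iff₀ (hDpos k h1)]
    simp only [hgdef]
    constructor <;> intro <;> linarith
  have hcond2 : ∀ k, k0 ≤ k → k + 1 ≤ m → (N k / D k ≤ r (k+1) ↔ g (k+1) ≤ 0) := by
    intro k h1 h2
    rw [div_le_iff₀ (hDpos k h1), hstep k h2]
    constructor <;> intro <;> linarith
  refine ⟨K, ⟨Finset.mem_Icc.mpr ⟨by omega, hKm⟩, ?_, ?_⟩, ?_⟩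
  · rw [hexpr K]
    exact (hcond K hk0K).mpr hgK
  · intro hKm'
    rw [hexpr K]
    exact (hcond2 K hk0K (by omega)).mpr (hnext hKm')
  · rintro k ⟨hkIcc, hk1, hk2⟩
    rw [hexpr k] at hk1 hk2
    rcases Finset.mem_Icc.mp hkIcc with ⟨hk1m, hk2m⟩
    have hk0k : k0 ≤ k := by
      by_contra h
      push_neg at h
      rw [hDzero k h, div_zero] at hk1
      have := hr_pos k hkIcc
      linarith
    have hgk : 0 < g k := (hcond k hk0k).mp hk1
    have hkS : k ∈ S := Finset.mem_filter.mpr ⟨Finset.mem_Icc.mpr ⟨hk0k, hk2m⟩, hgk⟩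
    have hkK : k ≤ K := S.le_max' k hkS
    rcases eq_or_lt_of_le hkK with h | h
    · exact h
    · exfalso
      have hkm : k < m := by omega
      have hstep2 : g (k+1) ≤ 0 := (hcond2 k hk0k (by omega)).mp (hk2 hkm)
      have hle : g K ≤ g (k+1) := hanti (k+1) K (by omega) (by omega) hKm
      linarith
end

section
/- In the setting of the previous statement, the unique index k* with r_{k*} < Π(k*) ≤ r_{k*+1} minimizes Π over all admissible k: for k' < k* one has Π(k') > r_{k'+1} and Π(k') ≥ Π(k*), and for k' > k* one has r_{k*} < Π(k') ≤ r_{k'} and Π(k') ≥ Π(k*). -/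
lemma sum_filter_le_succ (I' : Finset ℕ) (f : ℕ → ℝ) (k : ℕ) :
    ∑ i ∈ I'.filter (fun i => i ≤ k + 1), f i
      = ∑ i ∈ I'.filter (fun i => i ≤ k), f i + (if k + 1 ∈ I' then f (k+1) else 0) := by
  rw [Finset.sum_filter, Finset.sum_filter, ← Finset.sum_ite_eq' I' (k+1) f,
    ← Finset.sum_add_distrib]
  apply Finset.sum_congr rfl
  intro i _
  rcases Nat.lt_trichotomy i (k+1) with h | h | h
  · have h1 : i ≤ k := by omega
    have h2 : i ≤ k + 1 := by omega
    have h3 : i ≠ k + 1 := by omega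
    simp [h1, h2, h3]
  · simp [h, Nat.lt_irrefl]
  · have h1 : ¬ i ≤ k := by omega
    have h2 : ¬ i ≤ k + 1 := by omega
    have h3 : i ≠ k + 1 := by omega
    simp [h1, h2, h3]

lemma sum_filter_gt_succ (I' : Finset ℕ) (f : ℕ → ℝ) (k : ℕ) :
    ∑ i ∈ I'.filter (fun i => k < i), f i
      = ∑ i ∈ I'.filter (fun i => k + 1 < i), f i + (if k + 1 ∈ I' then f (k+1) else 0) := by
  rw [Finset.sum_filter, Finset.sum_filter, ← Finset.sum_ite_eq' I' (k+1) f,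
    ← Finset.sum_add_distrib]
  apply Finset.sum_congr rfl
  intro i _
  rcases Nat.lt_trichotomy i (k+1) with h | h | h
  · have h1 : ¬ k < i := by omega
    have h2 : ¬ k + 1 < i := by omega
    have h3 : i ≠ k + 1 := by omega
    simp [h1, h2, h3]
  · have h1 : k < i := by omega
    have h2 : ¬ k + 1 < i := by omega
    simp [h1, h2, h]
  · have h1 : k < i := by omega
    have h2 : k + 1 < i := by omega
    have h3 : i ≠ k + 1 := by omega
    simp [h1, h2, h3]

lemma mediant_lemma (Nv Sv rv e : ℝ) (hS : 0 < Sv) (hr : 0 < rv) (he : 0 ≤ e) :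
    (rv < (Nv + rv * e) / (Sv + e) → (Nv + rv * e) / (Sv + e) ≤ Nv / Sv) ∧
    (Nv / Sv ≤ rv → (Nv + rv * e) / (Sv + e) ≤ rv ∧ Nv / Sv ≤ (Nv + rv * e) / (Sv + e)) := by
  have hSe : 0 < Sv + e := by linarith
  constructor
  · intro h
    rw [lt_div_iff₀ hSe] at h
    rw [div_le_div_iff₀ hSe hS]
    have hN : rv * Sv < Nv := by nlinarith
    nlinarith [mul_nonneg he (le_of_lt (sub_pos.mpr hN))]
  · intro h
    rw [div_le_iff₀ hS] at h
    constructor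
    · rw [div_le_iff₀ hSe]; nlinarith
    · rw [div_le_div_iff₀ hS hSe]
      nlinarith [mul_nonneg he (sub_nonneg.mpr h)]

theorem peak_rate_index_minimizes (m : ℕ) (hm : 0 < m)
    (r : ℕ → ℝ) (ρ : ℕ → ℝ) (I' : Finset ℕ) (Cv : ℝ)
    (hI'sub : I' ⊆ Finset.Icc 1 m) (hI'ne : I'.Nonempty)
    (hr_pos : ∀ k ∈ Finset.Icc 1 m, 0 < r k)
    (hr_mono : ∀ k k', 1 ≤ k → k ≤ k' → k' ≤ m → r k ≤ r k')
    (hρ : ∀ i ∈ I', 0 < ρ i)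
    (hC : (∑ i ∈ I', ρ i) < Cv)
    (Pi : ℕ → ℝ)
    (hPi : ∀ k, Pi k = (Cv - ∑ i ∈ I'.filter (fun i => k < i), ρ i) /
              (∑ i ∈ I'.filter (fun i => i ≤ k), ρ i / r i))
    (kstar : ℕ) (hkstar : kstar ∈ Finset.Icc 1 m)
    (hlow : r kstar < Pi kstar)
    (hhigh : kstar < m → Pi kstar ≤ r (kstar + 1)) :
    ∀ k' ∈ Finset.Icc 1 m, I'.min' hI'ne ≤ k' →
      (k' < kstar → r (k' + 1) < Pi k' ∧ Pi kstar ≤ Pi k') ∧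
      (kstar < k' → (r kstar < Pi k' ∧ Pi k' ≤ r k') ∧ Pi kstar ≤ Pi k') := by
  have hksIcc := Finset.mem_Icc.mp hkstar
  set i0 := I'.min' hI'ne with hi0
  have hi0I : i0 ∈ I' := Finset.min'_mem _ _
  have hi0m : i0 ∈ Finset.Icc 1 m := hI'sub hi0I
  have h1i0 : 1 ≤ i0 := (Finset.mem_Icc.mp hi0m).1
  -- positivity of denominator
  have hSpos : ∀ k, i0 ≤ k → 0 < ∑ i ∈ I'.filter (fun i => i ≤ k), ρ i / r i := by
    intro k hk
    apply Finset.sum_pos'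
    · intro i hi
      have hiI := (Finset.mem_filter.mp hi).1
      exact div_nonneg (hρ i hiI).le (hr_pos i (hI'sub hiI)).le
    · exact ⟨i0, Finset.mem_filter.mpr ⟨hi0I, hk⟩, div_pos (hρ i0 hi0I) (hr_pos i0 hi0m)⟩
  -- i0 ≤ kstar
  have hi0kstar : i0 ≤ kstar := by
    by_contra h
    push_neg at h
    have hempty : I'.filter (fun i => i ≤ kstar) = ∅ := by
      apply Finset.filter_eq_empty_iff.mpr
      intro i hi
      have := Finset.min'_le I' i hi
      omega
    have hP0 : Pi kstar = 0 := by
      rw [hPi, hempty]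
      simp
    have := hr_pos kstar hkstar
    rw [hP0] at hlow
    linarith
  -- the key step lemma
  have step : ∀ k, i0 ≤ k → k + 1 ≤ m →
      (r (k+1) < Pi (k+1) → Pi (k+1) ≤ Pi k) ∧
      (Pi k ≤ r (k+1) → Pi (k+1) ≤ r (k+1) ∧ Pi k ≤ Pi (k+1)) := by
    intro k hk hkm
    have hrk : 0 < r (k+1) := hr_pos _ (Finset.mem_Icc.mpr ⟨by omega, hkm⟩)
    set a : ℝ := if k+1 ∈ I' then ρ (k+1) else 0 with ha
    have hae : 0 ≤ a := by
      rw [ha]; split_ifs with h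
      · exact (hρ _ h).le
      · exact le_refl 0
    set e : ℝ := a / r (k+1) with he'
    have he : 0 ≤ e := div_nonneg hae hrk.le
    have hac : a = r (k+1) * e := by
      rw [he']; field_simp
    have hSstep : (∑ i ∈ I'.filter (fun i => i ≤ k + 1), ρ i / r i)
        = (∑ i ∈ I'.filter (fun i => i ≤ k), ρ i / r i) + e := by
      rw [sum_filter_le_succ]
      congr 1
      rw [he', ha]
      split_ifs with h
      · rfl
      · simp
    have hNstep : (Cv - ∑ i ∈ I'.filter (fun i => k + 1 < i), ρ i)
        = (Cv - ∑ i ∈ I'.filter (fun i => k < i), ρ i) + a := by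
      rw [sum_filter_gt_succ I' ρ k, ha]
      ring
    have hP1 : Pi (k+1) = ((Cv - ∑ i ∈ I'.filter (fun i => k < i), ρ i) + r (k+1) * e)
        / ((∑ i ∈ I'.filter (fun i => i ≤ k), ρ i / r i) + e) := by
      rw [hPi, hNstep, hSstep, hac]
    have hP0 : Pi k = (Cv - ∑ i ∈ I'.filter (fun i => k < i), ρ i)
        / (∑ i ∈ I'.filter (fun i => i ≤ k), ρ i / r i) := hPi k
    rw [hP1, hP0]
    exact mediant_lemma _ _ _ e (hSpos k hk) hrk he
  -- backward induction
  have hA : ∀ j, i0 ≤ kstar - j → r (kstar - j) < Pi (kstar - j) ∧ Pi kstar ≤ Pi (kstar - j) := by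
    intro j
    induction j with
    | zero =>
      intro _
      simp only [Nat.sub_zero]
      exact ⟨hlow, le_refl (Pi kstar)⟩
    | succ j ih =>
      intro hmin
      have hj1 : j + 1 ≤ kstar := by omega
      have hk1 : kstar - (j+1) + 1 = kstar - j := by omega
      obtain ⟨h1, h2⟩ := ih (by omega)
      rw [← hk1] at h1 h2
      have hst := (step (kstar - (j+1)) hmin (by omega)).1 h1
      refine ⟨?_, le_trans h2 hst⟩
      have hrm : r (kstar - (j+1)) ≤ r (kstar - (j+1) + 1) :=
        hr_mono _ _ (by omega) (by omega) (by omega)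
      linarith
  -- forward induction
  have hB : ∀ k, kstar ≤ k → k ≤ m →
      Pi kstar ≤ Pi k ∧ (k < m → Pi k ≤ r (k+1)) ∧ (kstar < k → Pi k ≤ r k) := by
    intro k hk
    induction k, hk using Nat.le_induction with
    | base =>
      intro _
      exact ⟨le_refl _, hhigh, fun h => absurd h (lt_irrefl kstar)⟩
    | succ n hn ih =>
      intro hnm
      have h1 : n < m := by omega
      obtain ⟨ihA, ihB, _⟩ := ih (by omega)
      have hPn := ihB h1
      have hst := (step n (by omega) (by omega)).2 hPn
      refine ⟨le_trans ihA hst.2, ?_, fun _ => hst.1⟩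
      intro hm'
      have hrm : r (n+1) ≤ r (n+1+1) := hr_mono _ _ (by omega) (by omega) (by omega)
      linarith [hst.1]
  -- conclusion
  intro k' hk' hmink'
  have hk'm := Finset.mem_Icc.mp hk'
  constructor
  · intro hlt
    have hkk : kstar - (kstar - k') = k' := by omega
    have hP' := hA (kstar - k') (by omega)
    rw [hkk] at hP'
    have hkk2 : kstar - (kstar - (k'+1)) = k' + 1 := by omega
    have hP'' := hA (kstar - (k'+1)) (by omega)
    rw [hkk2] at hP''
    obtain ⟨h1, _⟩ := hP''
    have hst := (step k' hmink' (by omega)).1 h1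
    exact ⟨lt_of_lt_of_le h1 hst, hP'.2⟩
  · intro hgt
    obtain ⟨hge, _, hle⟩ := hB k' (by omega) hk'm.2
    exact ⟨⟨lt_of_lt_of_le hlow hge, hle hgt⟩, hge⟩
end

section
/- For the 2×2 matrix Q' with rows (−(N−1)q, (N−1)q) and (q, −q), where q > 0 and N ≥ 2, the (1,1) entry of the matrix exponential e^{Q't} equals (1/N)(1 + (N−1)e^{−Nqt}) for all t ≥ 0. -/
open NormedSpace

theorem exp_two_state_entry (N : ℕ) (hN : 2 ≤ N) (q t : ℝ) (hq : 0 < q) (ht : 0 ≤ t)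
    (Q' : Matrix (Fin 2) (Fin 2) ℝ)
    (hQ' : Q' = !![-((N : ℝ) - 1) * q, ((N : ℝ) - 1) * q; q, -q]) :
    (exp (t • Q')) 0 0 = (1 / (N : ℝ)) * (1 + ((N : ℝ) - 1) * Real.exp (-(N : ℝ) * q * t)) := by
  subst hQ'
  have hN0 : (N : ℝ) ≠ 0 := by
    have : (2 : ℝ) ≤ (N : ℝ) := by exact_mod_cast hN
    linarith
  set P : Matrix (Fin 2) (Fin 2) ℝ := !![1, (N : ℝ) - 1; 1, -1] with hP
  set Pinv : Matrix (Fin 2) (Fin 2) ℝ := (N : ℝ)⁻¹ • !![1, (N : ℝ) - 1; 1, -1] with hPinv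
  have hPPinv : P * Pinv = 1 := by
    ext i j
    fin_cases i <;> fin_cases j <;>
      simp [hP, hPinv, Matrix.mul_apply, Fin.sum_univ_two, Matrix.one_apply] <;>
      field_simp <;> ring
  have hPinvP : Pinv * P = 1 := by
    ext i j
    fin_cases i <;> fin_cases j <;>
      simp [hP, hPinv, Matrix.mul_apply, Fin.sum_univ_two, Matrix.one_apply] <;>
      field_simp <;> ring
  set U : (Matrix (Fin 2) (Fin 2) ℝ)ˣ := ⟨P, Pinv, hPPinv, hPinvP⟩ with hU
  have hD : Matrix.diagonal ![(0 : ℝ), -((N : ℝ) * q * t)] = !![0, 0; 0, -((N : ℝ) * q * t)] := by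
    ext i j
    fin_cases i <;> fin_cases j <;> simp [Matrix.diagonal_apply]
  have hdecomp : t • (!![-((N : ℝ) - 1) * q, ((N : ℝ) - 1) * q; q, -q]) =
      (U : Matrix (Fin 2) (Fin 2) ℝ) * Matrix.diagonal ![0, -((N : ℝ) * q * t)] *
        ((U⁻¹ : (Matrix (Fin 2) (Fin 2) ℝ)ˣ) : Matrix (Fin 2) (Fin 2) ℝ) := by
    show _ = P * Matrix.diagonal ![0, -((N : ℝ) * q * t)] * Pinv
    rw [hD]
    ext i j
    fin_cases i <;> fin_cases j <;>
      simp [hP, hPinv, Matrix.mul_apply, Fin.sum_univ_two] <;>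
      field_simp <;> ring
  rw [hdecomp, Matrix.exp_units_conj, Matrix.exp_diagonal]
  show (P * Matrix.diagonal (exp ![0, -((N : ℝ) * q * t)]) * Pinv) 0 0 = _
  have h0 : exp ![(0 : ℝ), -((N : ℝ) * q * t)] 0 = 1 := by
    rw [Pi.coe_exp]; simp [exp_zero]
  have h1 : exp ![(0 : ℝ), -((N : ℝ) * q * t)] 1 = Real.exp (-((N : ℝ) * q * t)) := by
    rw [Pi.coe_exp]; simp [Real.exp_eq_exp_ℝ]
  have hDe : Matrix.diagonal (exp ![(0 : ℝ), -((N : ℝ) * q * t)]) =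
      !![1, 0; 0, Real.exp (-((N : ℝ) * q * t))] := by
    ext i j
    fin_cases i <;> fin_cases j <;> simp [Matrix.diagonal_apply, h0, h1]
  rw [hDe]
  have he : Real.exp (-((N : ℝ) * q * t)) = Real.exp (-(N : ℝ) * q * t) := by ring_nf
  simp [hP, hPinv, Matrix.mul_apply, Fin.sum_univ_two, he]
  field_simp
end

section
/- Fix a strongly connected resource set J̃. Then the cut constraint corresponding to J̃ is not redundant: there exists an allocation vector Λ ≥ 0 such that ∑_{i∈I(J̃)} Λ_i > C(J̃) while ∑_{i∈I(J')} Λ_i ≤ C(J') holds (strictly) for every other strongly connected J' ≠ J̃. -/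
theorem cut_constraint_not_redundant {ι κ : Type*} [Fintype ι] [Fintype κ]
    [DecidableEq ι] [DecidableEq κ]
    (Jmap : ι → Finset κ) (C : κ → ℝ) (SC : Finset κ → Prop)
    (hC : ∀ j, 0 < C j)
    (Jt : Finset κ) (hJt : SC Jt) (hJtne : Jt.Nonempty)
    (hcover : ∀ j ∈ Jt, ∃ i ∈ Finset.univ.filter (fun i => Jmap i ⊆ Jt), j ∈ Jmap i)
    (hprop : ∀ J', SC J' → J' ⊂ Jt →
      ∃ i ∈ Finset.univ.filter (fun i => Jmap i ⊆ Jt),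
        (Jmap i ∩ J').Nonempty ∧ i ∉ Finset.univ.filter (fun i => Jmap i ⊆ J')) :
    ∃ Λ : ι → ℝ, (∀ i, 0 ≤ Λ i) ∧
      (∑ j ∈ Jt, C j) < (∑ i ∈ Finset.univ.filter (fun i => Jmap i ⊆ Jt), Λ i) ∧
      (∀ J', SC J' → J' ≠ Jt →
        (∑ i ∈ Finset.univ.filter (fun i => Jmap i ⊆ J'), Λ i) < ∑ j ∈ J', C j) := by
  classical
  set IJt : Finset ι := Finset.univ.filter (fun i => Jmap i ⊆ Jt) with hIJt_def
  obtain ⟨j0, hj0⟩ := hJtne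
  obtain ⟨i0, hi0, _⟩ := hcover j0 hj0
  have hIJtne : IJt.Nonempty := ⟨i0, hi0⟩
  set N : κ → Finset ι := fun j => IJt.filter (fun i => j ∈ Jmap i) with hN_def
  have hNpos : ∀ j ∈ Jt, 0 < (N j).card := by
    intro j hj
    obtain ⟨i, hi, hji⟩ := hcover j hj
    exact Finset.card_pos.mpr ⟨i, Finset.mem_filter.mpr ⟨hi, hji⟩⟩
  set f : κ → ℝ := fun j => C j / ((N j).card : ℝ) with hf_def
  have hfpos : ∀ j ∈ Jt, 0 < f j := fun j hj =>
    div_pos (hC j) (by exact_mod_cast hNpos j hj)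
  have hfnn : ∀ j, 0 ≤ f j := fun j => div_nonneg (hC j).le (Nat.cast_nonneg _)
  set g : ι → ℝ := fun i => ∑ j ∈ Jmap i, f j with hg_def
  have hgnn : ∀ i, 0 ≤ g i := fun i => Finset.sum_nonneg fun j _ => hfnn j
  have hNC : ∀ j ∈ Jt, ((N j).card : ℝ) * f j = C j := by
    intro j hj
    have h0 : ((N j).card : ℝ) ≠ 0 := by
      exact_mod_cast (hNpos j hj).ne'
    rw [hf_def]
    field_simp
  -- double counting
  have key : ∀ S : Finset ι, S ⊆ IJt →
      ∑ i ∈ S, g i = ∑ j ∈ Jt, ((S.filter (fun i => j ∈ Jmap i)).card : ℝ) * f j := by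
    intro S hS
    have h1 : ∀ i ∈ S, g i = ∑ j ∈ Jt, if j ∈ Jmap i then f j else 0 := by
      intro i hi
      have hsub : Jmap i ⊆ Jt := (Finset.mem_filter.mp (hS hi)).2
      rw [hg_def]
      rw [Finset.sum_ite_mem, Finset.inter_eq_right.mpr hsub]
    rw [Finset.sum_congr rfl h1, Finset.sum_comm]
    refine Finset.sum_congr rfl fun j hj => ?_
    rw [Finset.sum_ite, Finset.sum_const_zero, add_zero, Finset.sum_const, nsmul_eq_mul]
  have hbase_Jt : ∑ i ∈ IJt, g i = ∑ j ∈ Jt, C j := by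
    rw [key IJt (Finset.Subset.refl _)]
    exact Finset.sum_congr rfl fun j hj => hNC j hj
  -- for each candidate cut set
  set S : Finset κ → Finset ι :=
    fun J' => (Finset.univ.filter (fun i => Jmap i ⊆ J')) ∩ IJt with hS_def
  have hS_sub : ∀ J', S J' ⊆ IJt := fun J' => Finset.inter_subset_right
  set base : Finset κ → ℝ := fun J' => ∑ i ∈ S J', g i with hbase_def
  have hfilter_sub : ∀ J' j, (S J').filter (fun i => j ∈ Jmap i) ⊆ N j := by
    intro J' j
    exact Finset.filter_subset_filter _ (hS_sub J')
  have hterm_le : ∀ (J' : Finset κ), ∀ j ∈ Jt,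
      (((S J').filter (fun i => j ∈ Jmap i)).card : ℝ) * f j ≤ C j := by
    intro J' j hj
    calc (((S J').filter (fun i => j ∈ Jmap i)).card : ℝ) * f j
        ≤ ((N j).card : ℝ) * f j := by
          apply mul_le_mul_of_nonneg_right _ (hfnn j)
          exact_mod_cast Finset.card_le_card (hfilter_sub J' j)
      _ = C j := hNC j hj
  have hterm0 : ∀ (J' : Finset κ) j, j ∉ J' →
      ((S J').filter (fun i => j ∈ Jmap i)) = ∅ := by
    intro J' j hj
    apply Finset.filter_false_of_mem
    intro i hi
    have : Jmap i ⊆ J' := by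
      have := Finset.mem_inter.mp hi
      exact (Finset.mem_filter.mp this.1).2
    exact fun hmem => hj (this hmem)
  -- strict slack for every other SC set
  have hgap : ∀ J', SC J' → J' ≠ Jt → base J' < ∑ j ∈ J', C j := by
    intro J' hSC hne
    by_cases hsub : J' ⊆ Jt
    · have hss : J' ⊂ Jt := HasSubset.Subset.ssubset_of_ne hsub hne
      obtain ⟨istar, histar, ⟨jstar, hjstar⟩, histar_not⟩ := hprop J' hSC hss
      have hjstarJ : jstar ∈ Jmap istar := (Finset.mem_inter.mp hjstar).1
      have hjstarJ' : jstar ∈ J' := (Finset.mem_inter.mp hjstar).2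
      have hb1 : base J' = ∑ j ∈ Jt,
          (((S J').filter (fun i => j ∈ Jmap i)).card : ℝ) * f j :=
        key (S J') (hS_sub J')
      have hb : base J' = ∑ j ∈ J',
          (((S J').filter (fun i => j ∈ Jmap i)).card : ℝ) * f j := by
        rw [hb1]
        symm
        apply Finset.sum_subset hsub
        intro j hjt hj'
        rw [hterm0 J' j hj']
        simp
      rw [hb]
      apply Finset.sum_lt_sum (fun j hj => hterm_le J' j (hsub hj))
      refine ⟨jstar, hjstarJ', ?_⟩
      have hjt : jstar ∈ Jt := hsub hjstarJ'
      have hcardlt : ((S J').filter (fun i => jstar ∈ Jmap i)).card < (N jstar).card := by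
        apply Finset.card_lt_card
        refine Finset.ssubset_iff_of_subset (hfilter_sub J' jstar) |>.mpr ?_
        refine ⟨istar, ?_, ?_⟩
        · exact Finset.mem_filter.mpr ⟨histar, hjstarJ⟩
        · intro hmem
          have := (Finset.mem_filter.mp hmem).1
          have := (Finset.mem_inter.mp this).1
          exact histar_not this
      calc (((S J').filter (fun i => jstar ∈ Jmap i)).card : ℝ) * f jstar
          < ((N jstar).card : ℝ) * f jstar := by
            apply mul_lt_mul_of_pos_right _ (hfpos jstar hjt)
            exact_mod_cast hcardlt
        _ = C jstar := hNC jstar hjt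
    · obtain ⟨jb, hjbJ', hjbnot⟩ := Finset.not_subset.mp hsub
      calc base J' = ∑ j ∈ Jt,
            (((S J').filter (fun i => j ∈ Jmap i)).card : ℝ) * f j :=
            key (S J') (hS_sub J')
        _ ≤ ∑ j ∈ Jt, (if j ∈ J' then C j else 0) := by
            apply Finset.sum_le_sum
            intro j hj
            by_cases hjJ' : j ∈ J'
            · rw [if_pos hjJ']; exact hterm_le J' j hj
            · rw [if_neg hjJ', hterm0 J' j hjJ']; simp
        _ = ∑ j ∈ Jt ∩ J', C j := Finset.sum_ite_mem _ _ _
        _ < ∑ j ∈ J', C j := by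
            apply Finset.sum_lt_sum_of_subset Finset.inter_subset_right hjbJ'
              (fun h => hjbnot (Finset.mem_inter.mp h).1) (hC jb)
            exact fun j _ _ => (hC j).le
  -- choose epsilon
  set JJ : Finset (Finset κ) := Finset.univ.filter (fun s => SC s ∧ s ≠ Jt) with hJJ_def
  set D : Finset ℝ := insert 1 (JJ.image (fun s => (∑ j ∈ s, C j) - base s)) with hD_def
  have hDne : D.Nonempty := ⟨1, Finset.mem_insert_self _ _⟩
  set δ : ℝ := D.min' hDne with hδ_def
  have hδpos : 0 < δ := by
    rw [hδ_def, Finset.lt_min'_iff]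
    intro y hy
    rw [hD_def, Finset.mem_insert] at hy
    rcases hy with rfl | hy
    · norm_num
    · obtain ⟨s, hs, rfl⟩ := Finset.mem_image.mp hy
      have hs' := Finset.mem_filter.mp hs
      have := hgap s hs'.2.1 hs'.2.2
      linarith
  have hδle : ∀ J', SC J' → J' ≠ Jt → δ ≤ (∑ j ∈ J', C j) - base J' := by
    intro J' h1 h2
    apply Finset.min'_le
    rw [hD_def]
    apply Finset.mem_insert_of_mem
    exact Finset.mem_image.mpr ⟨J', Finset.mem_filter.mpr ⟨Finset.mem_univ _, h1, h2⟩, rfl⟩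
  set n : ℕ := Fintype.card ι with hn_def
  set ε : ℝ := δ / (2 * (n + 1)) with hε_def
  have hεpos : 0 < ε := by
    apply div_pos hδpos
    positivity
  have hεn : (n : ℝ) * ε < δ := by
    have hεeq : ε * (2 * ((n:ℝ) + 1)) = δ := by
      rw [hε_def]; field_simp
    have hn0 : (0:ℝ) ≤ (n:ℝ) := Nat.cast_nonneg n
    nlinarith
  refine ⟨fun i => if i ∈ IJt then g i + ε else 0, ?_, ?_, ?_⟩
  · intro i
    dsimp only
    split
    · have := hgnn i; linarith
    · exact le_refl 0
  · have h1 : ∑ i ∈ IJt, (if i ∈ IJt then g i + ε else 0) = ∑ i ∈ IJt, (g i + ε) := by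
      exact Finset.sum_congr rfl fun i hi => if_pos hi
    rw [h1, Finset.sum_add_distrib, Finset.sum_const, hbase_Jt, nsmul_eq_mul]
    have hcard : 0 < (IJt.card : ℝ) := by
      exact_mod_cast Finset.card_pos.mpr hIJtne
    nlinarith
  · intro J' hSC hne
    have h1 : ∑ i ∈ Finset.univ.filter (fun i => Jmap i ⊆ J'),
        (if i ∈ IJt then g i + ε else 0) = ∑ i ∈ S J', (g i + ε) := by
      rw [hS_def, Finset.sum_ite_mem]
    rw [h1, Finset.sum_add_distrib, Finset.sum_const, nsmul_eq_mul]
    have hcard : ((S J').card : ℝ) ≤ (n : ℝ) := by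
      rw [hn_def]
      exact_mod_cast Finset.card_le_univ _
    have h2 : ((S J').card : ℝ) * ε ≤ (n : ℝ) * ε :=
      mul_le_mul_of_nonneg_right hcard hεpos.le
    have h3 := hδle J' hSC hne
    have hb : ∑ i ∈ S J', g i = base J' := rfl
    rw [hb]
    linarith
end
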